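/- The system iA⁻ extended with the Box axiom (φ⊰ψ)→□(φ→ψ) derives the disjunction axiom Di: (φ⊰χ)→(ψ⊰χ)→((φ∨ψ)⊰χ). -/
import Mathlib


/-- Formulas of the language L⊰: IPC connectives plus a binary Lewis arrow `arr` (⊰). -/
inductive Fm : Type
  | bot  : Fm
  | top  : Fm
  | var  : Nat → Fm
  | and  : Fm → Fm → Fm
  | or   : Fm → Fm → Fm
  | imp  : Fm → Fm → Fm
  | arr  : Fm → Fm → Fm

namespace Fm
/-- Negation ¬φ := φ → ⊥. -/
def neg (φ : Fm) : Fm := φ.imp bot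
/-- The box modality □φ := ⊤ ⊰ φ. -/
def box (φ : Fm) : Fm := top.arr φ
end Fm

/-- Hilbert-style provability in iA₀ extended with an extra set `Ax` of axioms:
intuitionistic propositional logic, Modus Ponens, the rule (⊢ φ→ψ ⟹ ⊢ φ⊰ψ),
and the transitivity axiom Tr : (φ⊰ψ)→(ψ⊰χ)→(φ⊰χ). -/
inductive Prv (Ax : Fm → Prop) : Fm → Prop
  | ax {φ : Fm} : Ax φ → Prv Ax φ
  | mp {φ ψ : Fm} : Prv Ax (φ.imp ψ) → Prv Ax φ → Prv Ax ψ
  | impK (φ ψ : Fm) : Prv Ax (φ.imp (ψ.imp φ))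
  | impS (φ ψ χ : Fm) : Prv Ax ((φ.imp (ψ.imp χ)).imp ((φ.imp ψ).imp (φ.imp χ)))
  | andI (φ ψ : Fm) : Prv Ax (φ.imp (ψ.imp (φ.and ψ)))
  | andE1 (φ ψ : Fm) : Prv Ax ((φ.and ψ).imp φ)
  | andE2 (φ ψ : Fm) : Prv Ax ((φ.and ψ).imp ψ)
  | orI1 (φ ψ : Fm) : Prv Ax (φ.imp (φ.or ψ))
  | orI2 (φ ψ : Fm) : Prv Ax (ψ.imp (φ.or ψ))
  | orE (φ ψ χ : Fm) : Prv Ax ((φ.imp χ).imp ((ψ.imp χ).imp ((φ.or ψ).imp χ)))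
  | botE (φ : Fm) : Prv Ax (Fm.bot.imp φ)
  | topI : Prv Ax Fm.top
  | nec {φ ψ : Fm} : Prv Ax (φ.imp ψ) → Prv Ax (φ.arr ψ)
  | tr (φ ψ χ : Fm) : Prv Ax ((φ.arr ψ).imp ((ψ.arr χ).imp (φ.arr χ)))

/-- The empty set of extra axioms (so `Prv NoAx` is iA₀). -/
def NoAx : Fm → Prop := fun _ => False

/-- K⊰ : (φ⊰ψ)→(φ⊰χ)→(φ⊰(ψ∧χ)). -/
def KAx : Fm → Prop :=
  fun f => ∃ φ ψ χ : Fm, f = (φ.arr ψ).imp ((φ.arr χ).imp (φ.arr (ψ.and χ)))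

/-- K'⊰ : (φ⊰ψ)→((φ∧χ)⊰(ψ∧χ)). -/
def KpAx : Fm → Prop :=
  fun f => ∃ φ ψ χ : Fm, f = (φ.arr ψ).imp ((φ.and χ).arr (ψ.and χ))

/-- K'''⊰ : (φ⊰(ψ→χ))→((φ∧ψ)⊰χ). -/
def KpppAx : Fm → Prop :=
  fun f => ∃ φ ψ χ : Fm, f = (φ.arr (ψ.imp χ)).imp ((φ.and ψ).arr χ)

/-- Di : (φ⊰χ)→(ψ⊰χ)→((φ∨ψ)⊰χ). -/
def DiAx : Fm → Prop :=
  fun f => ∃ φ ψ χ : Fm, f = (φ.arr χ).imp ((ψ.arr χ).imp ((φ.or ψ).arr χ))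

/-- Box : (φ⊰ψ)→□(φ→ψ). -/
def BoxAx : Fm → Prop :=
  fun f => ∃ φ ψ : Fm, f = (φ.arr ψ).imp (Fm.box (φ.imp ψ))

/-- Box' : ((χ∧φ)⊰ψ)→(χ⊰(φ→ψ)). -/
def BoxpAx : Fm → Prop :=
  fun f => ∃ φ ψ χ : Fm, f = ((χ.and φ).arr ψ).imp (χ.arr (φ.imp ψ))

/-- Box'' : (φ⊰ψ)→((χ→φ)⊰(χ→ψ)). -/
def BoxppAx : Fm → Prop :=
  fun f => ∃ φ ψ χ : Fm, f = (φ.arr ψ).imp ((χ.imp φ).arr (χ.imp ψ))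

/-- em : φ∨¬φ. -/
def EmAx : Fm → Prop := fun f => ∃ φ : Fm, f = φ.or φ.neg

/-- S□ : φ→□φ. -/
def SboxAx : Fm → Prop := fun f => ∃ φ : Fm, f = φ.imp (Fm.box φ)

/-- S⊰ : (φ→ψ)→(φ⊰ψ). -/
def SarrAx : Fm → Prop := fun f => ∃ φ ψ : Fm, f = (φ.imp ψ).imp (φ.arr ψ)

/-- S'⊰ : (φ⊰ψ)→(φ→□ψ). -/
def SparrAx : Fm → Prop := fun f => ∃ φ ψ : Fm, f = (φ.arr ψ).imp (φ.imp (Fm.box ψ))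

/-- L⊰ : (□φ→φ)⊰φ. -/
def LarrAx : Fm → Prop := fun f => ∃ φ : Fm, f = ((Fm.box φ).imp φ).arr φ

/-- L□ : □(□φ→φ)→□φ. -/
def LboxAx : Fm → Prop := fun f => ∃ φ : Fm, f = (Fm.box ((Fm.box φ).imp φ)).imp (Fm.box φ)

/-- 4⊰ : φ⊰□φ. -/
def FourAx : Fm → Prop := fun f => ∃ φ : Fm, f = φ.arr (Fm.box φ)

/-- W⊰ : ((φ∧□ψ)⊰ψ)→(φ⊰ψ). -/
def WAx : Fm → Prop := fun f => ∃ φ ψ : Fm, f = ((φ.and (Fm.box ψ)).arr ψ).imp (φ.arr ψ)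

/-- W'⊰ : (φ⊰ψ)→((□ψ→φ)⊰ψ). -/
def WpAx : Fm → Prop := fun f => ∃ φ ψ : Fm, f = (φ.arr ψ).imp (((Fm.box ψ).imp φ).arr ψ)

/-- M⊰ : (φ⊰ψ)→((□χ→φ)⊰(□χ→ψ)). -/
def MAx : Fm → Prop :=
  fun f => ∃ φ ψ χ : Fm, f = (φ.arr ψ).imp (((Fm.box χ).imp φ).arr ((Fm.box χ).imp ψ))

/-- P⊰ : (φ⊰ψ)→□(φ⊰ψ). -/
def PAx : Fm → Prop := fun f => ∃ φ ψ : Fm, f = (φ.arr ψ).imp (Fm.box (φ.arr ψ))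

/-- CB⊰ : (φ⊰ψ)→((φ→ψ)∨φ). -/
def CBAx : Fm → Prop := fun f => ∃ φ ψ : Fm, f = (φ.arr ψ).imp ((φ.imp ψ).or φ)

/-- C4⊰ : □φ⊰φ. -/
def C4Ax : Fm → Prop := fun f => ∃ φ : Fm, f = (Fm.box φ).arr φ

/-- App⊰ : (φ∧(φ⊰ψ))⊰ψ. -/
def AppAx : Fm → Prop := fun f => ∃ φ ψ : Fm, f = (φ.and (φ.arr ψ)).arr ψ

/-- Hug : (φ→□ψ)→(φ⊰ψ). -/
def HugAx : Fm → Prop := fun f => ∃ φ ψ : Fm, f = (φ.imp (Fm.box ψ)).imp (φ.arr ψ)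

/-- Union of two axiom sets. -/
def AxU (A B : Fm → Prop) : Fm → Prop := fun f => A f ∨ B f

namespace PrvHelpers
open Fm Prv
variable {Ax : Fm → Prop}

theorem prv_id (a : Fm) : Prv Ax (a.imp a) :=
  .mp (.mp (.impS a (a.imp a) a) (.impK a (a.imp a))) (.impK a a)

theorem imp_trans {a b c : Fm} (h1 : Prv Ax (a.imp b)) (h2 : Prv Ax (b.imp c)) :
    Prv Ax (a.imp c) :=
  .mp (.mp (.impS a b c) (.mp (.impK (b.imp c) a) h2)) h1

theorem imp_mono {x y : Fm} (b : Fm) (h : Prv Ax (x.imp y)) :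
    Prv Ax ((b.imp x).imp (b.imp y)) :=
  .mp (.impS b x y) (.mp (.impK (x.imp y) b) h)

/-- ⊢ a → (a→b) → b -/
theorem app_thm (a b : Fm) : Prv Ax (a.imp ((a.imp b).imp b)) :=
  imp_trans (.impK a (a.imp b))
    (.mp (.impS (a.imp b) a b) (prv_id (a.imp b)))

/-- From ⊢ p→q→r infer ⊢ (p∧q)→r -/
theorem and_imp {p q r : Fm} (h : Prv Ax (p.imp (q.imp r))) :
    Prv Ax ((p.and q).imp r) :=
  .mp (.mp (.impS (p.and q) q r) (imp_trans (.andE1 p q) h)) (.andE2 p q)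

/-- From ⊢ a→(b→c) and ⊢ b infer ⊢ a→c -/
theorem swap_mp {a b c : Fm} (h : Prv Ax (a.imp (b.imp c))) (hb : Prv Ax b) :
    Prv Ax (a.imp c) :=
  .mp (.mp (.impS a b c) h) (.mp (.impK b a) hb)

/-- From ⊢ b→x infer ⊢ (x→y)→(b→y) -/
theorem precomp {b x : Fm} (y : Fm) (h : Prv Ax (b.imp x)) :
    Prv Ax ((x.imp y).imp (b.imp y)) :=
  swap_mp (imp_trans (.impK (x.imp y) b) (.impS b x y)) h

/-- From ⊢ A→B→x and ⊢ x→y infer ⊢ A→B→y -/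
theorem chain2 {A B x y : Fm} (h1 : Prv Ax (A.imp (B.imp x)))
    (h2 : Prv Ax (x.imp y)) : Prv Ax (A.imp (B.imp y)) :=
  imp_trans h1 (imp_mono B h2)

end PrvHelpers

open Fm Prv PrvHelpers in

/-- iA⁻ + Box derives Di : (φ⊰χ)→(ψ⊰χ)→((φ∨ψ)⊰χ). -/
theorem stmt7 :
    ∀ φ ψ χ : Fm, Prv (AxU KAx BoxAx) ((φ.arr χ).imp ((ψ.arr χ).imp ((φ.or ψ).arr χ))) := by

  intro φ ψ χ
  set A := φ.arr χ
  set B := ψ.arr χ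
  set θ := φ.or ψ
  have kax : ∀ a b c : Fm,
      Prv (AxU KAx BoxAx) ((a.arr b).imp ((a.arr c).imp (a.arr (b.and c)))) :=
    fun a b c => .ax (Or.inl ⟨a, b, c, rfl⟩)
  have box : ∀ a b : Fm, Prv (AxU KAx BoxAx) ((a.arr b).imp (Fm.box (a.imp b))) :=
    fun a b => .ax (Or.inr ⟨a, b, rfl⟩)
  -- step 1: A → B → ⊤⊰((φ→χ)∧(ψ→χ))
  have s1 : Prv (AxU KAx BoxAx)
      (A.imp (B.imp (Fm.top.arr ((φ.imp χ).and (ψ.imp χ))))) := by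
    have h1 := box φ χ
    have h2 := box ψ χ
    have hk := kax Fm.top (φ.imp χ) (ψ.imp χ)
    exact imp_trans (imp_trans h1 hk) (precomp _ h2)
  -- ((φ→χ)∧(ψ→χ)) ⊰ (θ→χ)
  have t1 : Prv (AxU KAx BoxAx) (((φ.imp χ).and (ψ.imp χ)).arr (θ.imp χ)) :=
    .nec (and_imp (.orE φ ψ χ))
  have s2 : Prv (AxU KAx BoxAx) (A.imp (B.imp (Fm.top.arr (θ.imp χ)))) :=
    chain2 s1 (swap_mp (.tr Fm.top ((φ.imp χ).and (ψ.imp χ)) (θ.imp χ)) t1)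
  -- θ⊰⊤, so Tr gives ⊤⊰(θ→χ) → θ⊰(θ→χ)
  have ttop : Prv (AxU KAx BoxAx) (θ.arr Fm.top) := .nec (.mp (.impK Fm.top θ) .topI)
  have s3 : Prv (AxU KAx BoxAx) (A.imp (B.imp (θ.arr (θ.imp χ)))) :=
    chain2 s2 (.mp (.tr θ Fm.top (θ.imp χ)) ttop)
  have tid : Prv (AxU KAx BoxAx) (θ.arr θ) := .nec (prv_id θ)
  have s4 : Prv (AxU KAx BoxAx) (A.imp (B.imp (θ.arr (θ.and (θ.imp χ))))) :=
    chain2 s3 (.mp (kax θ θ (θ.imp χ)) tid)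
  have tapp : Prv (AxU KAx BoxAx) ((θ.and (θ.imp χ)).arr χ) := .nec (and_imp (app_thm θ χ))
  exact chain2 s4 (swap_mp (.tr θ (θ.and (θ.imp χ)) χ) tapp)
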